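/- For a point x₀ ∈ X, the following are equivalent: (i) x₀ is topologically free; (ii) letting Y denote the closure of Orb(x₀) in X, for every g ∈ G \ {1} the set {y ∈ X_{g⁻¹} ∩ Y : θ_g(y) = y} has empty interior in the subspace topology of Y. -/

import Mathlib

/-- A (topological) partial action of a discrete group `G` on a topological space `X`:
open sets `Xg g` and homeomorphisms `θ g : Xg g⁻¹ → Xg g` (encoded as globally defined
maps that are continuous on their domains, with continuous inverse `θ g⁻¹`). -/
structure PartialAction (G : Type*) [Group G] (X : Type*) [TopologicalSpace X] where
  Xg : G → Set X
  θ : G → X → X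
  isOpen_Xg : ∀ g : G, IsOpen (Xg g)
  Xg_one : Xg 1 = Set.univ
  θ_one : ∀ x : X, θ 1 x = x
  mapsTo : ∀ g : G, ∀ x ∈ Xg g⁻¹, θ g x ∈ Xg g
  image_inter : ∀ g h : G, θ g '' (Xg g⁻¹ ∩ Xg h) = Xg g ∩ Xg (g * h)
  θ_comp : ∀ g h : G, ∀ x : X, x ∈ Xg h⁻¹ → x ∈ Xg (g * h)⁻¹ → θ g (θ h x) = θ (g * h) x
  continuousOn : ∀ g : G, ContinuousOn (θ g) (Xg g⁻¹)

namespace PartialAction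

variable {G : Type*} [Group G] {X : Type*} [TopologicalSpace X]

/-- `S x₀ = {g ∈ G : x₀ ∈ X_{g⁻¹}}`. -/
def S (P : PartialAction G X) (x₀ : X) : Set G := {g : G | x₀ ∈ P.Xg g⁻¹}

/-- The orbit of `x₀`:  `Orb(x₀) = {θ_g(x₀) : g ∈ S x₀}`. -/
def orbit (P : PartialAction G X) (x₀ : X) : Set X :=
  {y : X | ∃ g : G, x₀ ∈ P.Xg g⁻¹ ∧ P.θ g x₀ = y}

/-- The isotropy group `H x₀ = {g ∈ S x₀ : θ_g(x₀) = x₀}`. -/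
def isotropy (P : PartialAction G X) (x₀ : X) : Set G :=
  {g : G | x₀ ∈ P.Xg g⁻¹ ∧ P.θ g x₀ = x₀}

/-- A point `x₀` is topologically free if for every `g ≠ 1` and every open `V` with
`x₀ ∈ V ⊆ X_{g⁻¹}` there is `y ∈ V ∩ Orb(x₀)` with `θ_g(y) ≠ y`. -/
def TopFreePoint (P : PartialAction G X) (x₀ : X) : Prop :=
  ∀ g : G, g ≠ 1 → ∀ V : Set X, IsOpen V → x₀ ∈ V → V ⊆ P.Xg g⁻¹ →
    ∃ y ∈ V ∩ P.orbit x₀, P.θ g y ≠ y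

/-- A point `x` is strongly regular if for every `h` fixing `x` there is an open
`V` with `x ∈ V ⊆ X_{h⁻¹}` on which `θ_h` is the identity. -/
def StronglyRegular (P : PartialAction G X) (x : X) : Prop :=
  ∀ h : G, x ∈ P.Xg h⁻¹ → P.θ h x = x →
    ∃ V : Set X, IsOpen V ∧ x ∈ V ∧ V ⊆ P.Xg h⁻¹ ∧ ∀ y ∈ V, P.θ h y = y

end PartialAction

/-!
If `θ_g` fixes every point of `Y = closure Orb(x₀)` near some `θ_h(x₀)`, then the conjugate
`h⁻¹ g h ≠ 1` fixes every orbit point in the neighbourhood `θ_h⁻¹(U)` of `x₀`, so `x₀` is not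
topologically free. Conversely, if `g ≠ 1` fixes all orbit points of a neighbourhood `V` of `x₀`,
continuity of `θ_g` on `V` and the Hausdorff property extend this to `V ∩ Y`, a nonempty open
subset of `Y` made of fixed points.
-/

open Set

lemma nonempty_interior_preimage_val_iff {X : Type*} [TopologicalSpace X] {s A : Set X} :
    (interior (Subtype.val ⁻¹' A : Set s)).Nonempty ↔
      ∃ U : Set X, IsOpen U ∧ (U ∩ s).Nonempty ∧ U ∩ s ⊆ A := by
  constructor
  · rintro ⟨p, hp⟩
    obtain ⟨T, hTA, hTopen, hpT⟩ := mem_interior.mp hp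
    obtain ⟨U, hU, rfl⟩ := isOpen_induced_iff.mp hTopen
    exact ⟨U, hU, ⟨p, hpT, p.2⟩, fun y ⟨hyU, hys⟩ => @hTA ⟨y, hys⟩ hyU⟩
  · rintro ⟨U, hU, ⟨y, hyU, hys⟩, hUA⟩
    exact ⟨⟨y, hys⟩, mem_interior.mpr ⟨Subtype.val ⁻¹' U, fun q hq => hUA ⟨hq, q.2⟩,
      hU.preimage continuous_subtype_val, hyU⟩⟩

namespace PartialAction

variable {G : Type*} [Group G] {X : Type*} [TopologicalSpace X] (P : PartialAction G X)

def fixedPoints (g : G) : Set X := {y : X | y ∈ P.Xg g⁻¹ ∧ P.θ g y = y}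

lemma θ_inv_θ {g : G} {x : X} (hx : x ∈ P.Xg g⁻¹) : P.θ g⁻¹ (P.θ g x) = x := by
  rw [P.θ_comp g⁻¹ g x hx (by simp [P.Xg_one]), inv_mul_cancel, P.θ_one]

lemma mem_Xg_inv_mul_of_θ_mem {h A : G} {x : X} (hx : x ∈ P.Xg h⁻¹) (hθ : P.θ h x ∈ P.Xg A) :
    x ∈ P.Xg (h⁻¹ * A) := by
  have hmem : P.θ h x ∈ P.Xg h⁻¹⁻¹ ∩ P.Xg A := ⟨by simpa using P.mapsTo h x hx, hθ⟩
  have := P.image_inter h⁻¹ A ▸ mem_image_of_mem (P.θ h⁻¹) hmem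
  rw [P.θ_inv_θ hx] at this
  exact this.2

lemma mem_fixedPoints_conj {g h : G} {y : X} (hy : y ∈ P.Xg h⁻¹)
    (hfix : P.θ h y ∈ P.fixedPoints g) : y ∈ P.fixedPoints (h⁻¹ * g * h) := by
  obtain ⟨hθg, hθfix⟩ := hfix
  have hgh : y ∈ P.Xg (g * h)⁻¹ := by
    rw [mul_inv_rev]; exact P.mem_Xg_inv_mul_of_θ_mem hy hθg
  have hθgh : P.θ (g * h) y = P.θ h y := by rw [← P.θ_comp g h y hy hgh, hθfix]
  have hconj : y ∈ P.Xg (h⁻¹ * g * h)⁻¹ := by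
    have := P.mem_Xg_inv_mul_of_θ_mem hgh (hθgh ▸ P.mapsTo h y hy)
    rwa [show (h⁻¹ * g * h)⁻¹ = (g * h)⁻¹ * h by group]
  refine ⟨hconj, ?_⟩
  rw [mul_assoc, ← P.θ_comp h⁻¹ (g * h) y hgh (by rwa [← mul_assoc]), hθgh, P.θ_inv_θ hy]

lemma self_mem_orbit (x₀ : X) : x₀ ∈ P.orbit x₀ :=
  ⟨1, by simp [P.Xg_one], P.θ_one x₀⟩

lemma θ_mem_orbit {x₀ y : X} {h : G} (hy : y ∈ P.orbit x₀) (hyh : y ∈ P.Xg h⁻¹) :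
    P.θ h y ∈ P.orbit x₀ := by
  obtain ⟨m, hm, rfl⟩ := hy
  have hhm : x₀ ∈ P.Xg (h * m)⁻¹ := by
    rw [mul_inv_rev]; exact P.mem_Xg_inv_mul_of_θ_mem hm hyh
  exact ⟨h * m, hhm, (P.θ_comp h m x₀ hm hhm).symm⟩

lemma not_topFreePoint_of_orbit_inter_subset_fixedPoints {x₀ : X} {g : G} (hg : g ≠ 1)
    {U : Set X} (hU : IsOpen U) (hmeet : (U ∩ P.orbit x₀).Nonempty)
    (hfix : U ∩ P.orbit x₀ ⊆ P.fixedPoints g) : ¬ P.TopFreePoint x₀ := by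
  obtain ⟨_, hU₁, h, hx₀h, rfl⟩ := hmeet
  have hconj : h⁻¹ * g * h ≠ 1 := fun h1 =>
    hg (conj_eq_one_iff.mp (by rwa [inv_inv] : h⁻¹ * g * h⁻¹⁻¹ = 1))
  set V := P.Xg h⁻¹ ∩ P.θ h ⁻¹' U ∩ P.Xg (h⁻¹ * g * h)⁻¹
  have hVopen : IsOpen V :=
    ((P.continuousOn h).isOpen_inter_preimage (P.isOpen_Xg h⁻¹) hU).inter (P.isOpen_Xg _)
  have hx₀V : x₀ ∈ V :=
    ⟨⟨hx₀h, hU₁⟩, (P.mem_fixedPoints_conj hx₀h (hfix ⟨hU₁, h, hx₀h, rfl⟩)).1⟩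
  intro hfree
  obtain ⟨y, ⟨⟨⟨hyh, hyU⟩, -⟩, hyorb⟩, hmoved⟩ :=
    hfree _ hconj V hVopen hx₀V fun _ hx => hx.2
  exact hmoved (P.mem_fixedPoints_conj hyh (hfix ⟨hyU, P.θ_mem_orbit hyorb hyh⟩)).2

lemma inter_closure_subset_fixedPoints [T2Space X] {g : G} {V A : Set X} (hV : IsOpen V)
    (hVg : V ⊆ P.Xg g⁻¹) (hfix : V ∩ A ⊆ P.fixedPoints g) :
    V ∩ closure A ⊆ P.fixedPoints g := by
  have hEq : EqOn (P.θ g) id (V ∩ closure A) :=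
    EqOn.of_subset_closure (fun y hy => (hfix hy).2)
      ((P.continuousOn g).mono (inter_subset_left.trans hVg)) continuousOn_id
      (inter_subset_inter_right V subset_closure) hV.inter_closure
  exact fun y hy => ⟨hVg hy.1, hEq hy⟩

end PartialAction

theorem topFreePoint_iff_restriction_topologically_free_general
    {G X : Type*} [Group G] [TopologicalSpace X]
    [T2Space X]
    (P : PartialAction G X) (x₀ : X) :
    P.TopFreePoint x₀ ↔
      ∀ g : G, g ≠ 1 →
        interior (Subtype.val ⁻¹' {y : X | y ∈ P.Xg g⁻¹ ∧ P.θ g y = y} :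
          Set (closure (P.orbit x₀))) = ∅ := by
  simp only [← not_nonempty_iff_eq_empty, nonempty_interior_preimage_val_iff]
  constructor
  · rintro hfree g hg ⟨U, hU, hmeet, hfix⟩
    rw [inter_comm, closure_inter_open_nonempty_iff hU, inter_comm] at hmeet
    exact P.not_topFreePoint_of_orbit_inter_subset_fixedPoints hg hU hmeet
      ((inter_subset_inter_right U subset_closure).trans hfix) hfree
  · intro hnofix g hg V hV hx₀V hVg
    by_contra! hfix
    exact hnofix g hg ⟨V, hV, ⟨x₀, hx₀V, subset_closure (P.self_mem_orbit x₀)⟩,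
      P.inter_closure_subset_fixedPoints hV hVg fun y hy => ⟨hVg hy.1, hfix y hy⟩⟩

/-- A point `x₀` is topologically free if and only if, on the closure `Y`
of its orbit, every fixed-point set `{y ∈ X_{g⁻¹} ∩ Y : θ_g y = y}` (for `g ≠ 1`) has
empty interior in the subspace topology of `Y`. -/
theorem topFreePoint_iff_restriction_topologically_free
    {G X : Type*} [Group G] [TopologicalSpace X]
    [T2Space X] [LocallyCompactSpace X] [TotallyDisconnectedSpace X]
    (P : PartialAction G X) (hclopen : ∀ g : G, IsClopen (P.Xg g)) (x₀ : X) :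
    P.TopFreePoint x₀ ↔
      ∀ g : G, g ≠ 1 →
        interior (Subtype.val ⁻¹' {y : X | y ∈ P.Xg g⁻¹ ∧ P.θ g y = y} :
          Set (closure (P.orbit x₀))) = ∅ :=
  topFreePoint_iff_restriction_topologically_free_general P x₀
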